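/- For a small category C, the map (d_1,d_0) : N(C)_1 → N(C)_0 × N(C)_0 from the first level of the classifying diagram is a simplicial covering space (a map with the unique right lifting property against Δ[0] → Δ[n] for all n), and its fiber over any vertex (x,y) is the discrete set hom_C(x,y). -/

import Mathlib

open CategoryTheory Opposite

/-- Bisimplicial sets. -/
abbrev BiSSet := (SimplexCategoryᵒᵖ × SimplexCategoryᵒᵖ) ⥤ Type

namespace BiSSet

variable (W : BiSSet)

/-- Action in the first (horizontal) simplicial direction. -/
def hmap {a b : SimplexCategory} (θ : a ⟶ b) (n : SimplexCategoryᵒᵖ)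
    (x : W.obj (op b, n)) : W.obj (op a, n) :=
  W.map ((θ.op, 𝟙 n) : ((op b, n) : SimplexCategoryᵒᵖ × SimplexCategoryᵒᵖ) ⟶ (op a, n)) x

/-- Action in the second (vertical) simplicial direction. -/
def vmap {m n : SimplexCategory} (θ : m ⟶ n) (a : SimplexCategoryᵒᵖ)
    (x : W.obj (a, op n)) : W.obj (a, op m) :=
  W.map ((𝟙 a, θ.op) : ((a, op n) : SimplexCategoryᵒᵖ × SimplexCategoryᵒᵖ) ⟶ (a, op m)) x

lemma hmap_hmap {a b c : SimplexCategory} (θ : a ⟶ b) (η : b ⟶ c) (n : SimplexCategoryᵒᵖ)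
    (x : W.obj (op c, n)) : W.hmap θ n (W.hmap η n x) = W.hmap (θ ≫ η) n x := by
  dsimp [hmap]
  rw [← FunctorToTypes.map_comp_apply]
  rfl

/-- The set of "k-simplices of objects": the points of the `k`-th space. -/
abbrev Pt (k : ℕ) : Type := W.obj (op (SimplexCategory.mk k), op (SimplexCategory.mk 0))

/-- The source of a point of `W₁`. -/
def src (f : W.Pt 1) : W.Pt 0 := W.hmap (SimplexCategory.δ 1) _ f

/-- The target of a point of `W₁`. -/
def tgt (f : W.Pt 1) : W.Pt 0 := W.hmap (SimplexCategory.δ 0) _ f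

/-- The identity map of an object `x`, i.e. `s₀ x`. -/
def hid (x : W.Pt 0) : W.Pt 1 := W.hmap (SimplexCategory.σ 0) _ x

lemma src_hid (x : W.Pt 0) : W.src (W.hid x) = x := by
  dsimp [src, hid]
  rw [W.hmap_hmap]
  have : (SimplexCategory.δ 1 ≫ SimplexCategory.σ 0 :
      SimplexCategory.mk 0 ⟶ SimplexCategory.mk 0) = 𝟙 _ := by
    apply SimplexCategory.Hom.ext
    apply OrderHom.ext
    funext j
    exact @Subsingleton.elim (Fin 1) _ _ _
  rw [this]
  exact FunctorToTypes.map_id_apply W x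

lemma tgt_hid (x : W.Pt 0) : W.tgt (W.hid x) = x := by
  dsimp [tgt, hid]
  rw [W.hmap_hmap]
  have : (SimplexCategory.δ 0 ≫ SimplexCategory.σ 0 :
      SimplexCategory.mk 0 ⟶ SimplexCategory.mk 0) = 𝟙 _ := by
    apply SimplexCategory.Hom.ext
    apply OrderHom.ext
    funext j
    exact @Subsingleton.elim (Fin 1) _ _ _
  rw [this]
  exact FunctorToTypes.map_id_apply W x

/-- One step of a homotopy between points `f g` of `map(x,y) ⊆ W₁`:
a vertical `1`-simplex of `W₁` lying in the fiber over `(x,y)`. -/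
def HtpyStep (x y : W.Pt 0) (f g : W.Pt 1) : Prop :=
  ∃ e : W.obj (op (SimplexCategory.mk 1), op (SimplexCategory.mk 1)),
    W.vmap (SimplexCategory.δ 1) _ e = f ∧ W.vmap (SimplexCategory.δ 0) _ e = g ∧
    W.hmap (SimplexCategory.δ 1) _ e = W.vmap (SimplexCategory.σ 0) _ x ∧
    W.hmap (SimplexCategory.δ 0) _ e = W.vmap (SimplexCategory.σ 0) _ y

/-- `f` and `g` lie in the same path component of the mapping space `map(x,y)`. -/
def Homotopic (x y : W.Pt 0) (f g : W.Pt 1) : Prop :=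
  Relation.EqvGen (W.HtpyStep x y) f g

/-- `c` is a result of a composition of `f` (first) and `g` (second): there is a
point `k` of `W₂` lifting `(g,f)` along the Segal map `φ₂ = (d₂, d₀)`, with `d₁ k = c`. -/
def IsComposite (f g c : W.Pt 1) : Prop :=
  ∃ k : W.Pt 2,
    W.hmap (SimplexCategory.δ 2) _ k = f ∧
    W.hmap (SimplexCategory.δ 0) _ k = g ∧
    W.hmap (SimplexCategory.δ 1) _ k = c

/-- The `k`-th row of a bisimplicial set, a simplicial set. -/
def row (k : SimplexCategory) : SSet := (Functor.curry.obj W).obj (op k)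

/-- The simplicial map between rows induced by a morphism of `SimplexCategory`. -/
def rowMap {a b : SimplexCategory} (θ : a ⟶ b) : W.row b ⟶ W.row a :=
  (Functor.curry.obj W).map θ.op

lemma rowMap_rowMap {a b c : SimplexCategory} (θ : a ⟶ b) (η : b ⟶ c)
    (n : SimplexCategoryᵒᵖ) (x : (W.row c).obj n) :
    (W.rowMap θ).app n ((W.rowMap η).app n x) = (W.rowMap (θ ≫ η)).app n x := by
  unfold rowMap
  rw [op_comp, Functor.map_comp]
  rfl

/-- The map `[1] → [k]` hitting `i` and `i+1`. -/
def arrowHom (k : ℕ) (i : Fin k) : SimplexCategory.mk 1 ⟶ SimplexCategory.mk k :=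
  SimplexCategory.mkHom
    ⟨fun j => ⟨(i : ℕ) + (j : ℕ), by omega⟩, by
      intro a b hab
      simp only [Fin.mk_le_mk]
      omega⟩

/-- The target of the `k`-th Segal map: the `k`-fold fiber product
`W₁ ×_{W₀} ⋯ ×_{W₀} W₁`, as a simplicial set. -/
def segalTarget (k : ℕ) : SSet where
  obj n :=
    { f : Fin k → (W.row (SimplexCategory.mk 1)).obj n //
      ∀ (i : Fin k) (h : (i : ℕ) + 1 < k),
        (W.rowMap (SimplexCategory.δ 0)).app n (f i) =
        (W.rowMap (SimplexCategory.δ 1)).app n (f ⟨(i : ℕ) + 1, h⟩) }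
  map {n n'} g := TypeCat.ofHom fun x =>
    ⟨fun i => (W.row (SimplexCategory.mk 1)).map g (x.1 i), by
      intro i h
      rw [FunctorToTypes.naturality, FunctorToTypes.naturality, x.2 i h]⟩
  map_id n := by
    refine ConcreteCategory.hom_ext _ _ fun x => ?_
    apply Subtype.ext
    funext i
    exact FunctorToTypes.map_id_apply (F := W.row (SimplexCategory.mk 1)) (x.1 i)
  map_comp {n n' n''} g g' := by
    refine ConcreteCategory.hom_ext _ _ fun x => ?_
    apply Subtype.ext
    funext i
    exact FunctorToTypes.map_comp_apply (F := W.row (SimplexCategory.mk 1)) g g' (x.1 i)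

lemma arrowHom_comp_zero (k : ℕ) (i : Fin k) (h : (i : ℕ) + 1 < k) :
    (SimplexCategory.δ 0 ≫ arrowHom k i : SimplexCategory.mk 0 ⟶ SimplexCategory.mk k) =
    SimplexCategory.δ 1 ≫ arrowHom k ⟨(i : ℕ) + 1, h⟩ := by
  apply SimplexCategory.Hom.ext
  apply OrderHom.ext
  funext j
  have hj : j = 0 := @Subsingleton.elim (Fin 1) _ _ _
  subst hj
  apply Fin.ext
  simp [SimplexCategory.δ, arrowHom, Fin.succAbove] <;> rfl

/-- The `k`-th Segal map `φ_k : W_k → W₁ ×_{W₀} ⋯ ×_{W₀} W₁`. -/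
def segalMap (k : ℕ) : W.row (SimplexCategory.mk k) ⟶ W.segalTarget k where
  app n := TypeCat.ofHom fun x =>
    ⟨fun i => (W.rowMap (arrowHom k i)).app n x, by
      intro i h
      rw [W.rowMap_rowMap, W.rowMap_rowMap, arrowHom_comp_zero k i h]⟩
  naturality {n n'} g := by
    refine ConcreteCategory.hom_ext _ _ fun x => ?_
    apply Subtype.ext
    funext i
    show (W.rowMap (arrowHom k i)).app n' ((W.row (SimplexCategory.mk k)).map g x) =
      (W.row (SimplexCategory.mk 1)).map g ((W.rowMap (arrowHom k i)).app n x)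
    exact NatTrans.naturality_apply (W.rowMap (arrowHom k i)) g x

/-- A Segal space (in the operative sense used throughout): the Segal maps `φ_k`, `k ≥ 2`,
are trivial fibrations of simplicial sets, i.e. have the right lifting property with respect
to all boundary inclusions `∂Δ[n] → Δ[n]`. -/
def IsSegal : Prop :=
  ∀ (k : ℕ), 2 ≤ k → ∀ (n : ℕ),
    HasLiftingProperty (SSet.boundary n).ι (W.segalMap k)

end BiSSet

open CategoryTheory Opposite

/-- `Chaotic α` is the groupoid with objects `α` and a unique morphism (necessarily an
isomorphism) between any two objects; `Chaotic (Fin (n+1))` is the groupoid `I[n]`. -/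
def Chaotic (α : Type) : Type := α

instance (α : Type) : Groupoid (Chaotic α) where
  Hom _ _ := PUnit
  id _ := ⟨⟩
  comp _ _ := ⟨⟩
  inv _ := ⟨⟩

instance (α : Type) (a b : Chaotic α) : Subsingleton (a ⟶ b) := ⟨fun _ _ => rfl⟩

/-- A functor of chaotic groupoids from a map of underlying types. -/
def chaoticFunctor {α β : Type} (f : α → β) : Chaotic α ⥤ Chaotic β where
  obj := f
  map _ := ⟨⟩

/-- The indexing category `[m] × I[n]` associated to an object of `Δᵒᵖ × Δᵒᵖ`. -/
def classIndex (p : SimplexCategoryᵒᵖ × SimplexCategoryᵒᵖ) : Type :=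
  Fin (p.1.unop.len + 1) × Chaotic (Fin (p.2.unop.len + 1))

instance (p : SimplexCategoryᵒᵖ × SimplexCategoryᵒᵖ) : Category (classIndex p) :=
  inferInstanceAs (Category (Fin (p.1.unop.len + 1) × Chaotic (Fin (p.2.unop.len + 1))))

instance (p : SimplexCategoryᵒᵖ × SimplexCategoryᵒᵖ) (a b : classIndex p) :
    Subsingleton (a ⟶ b) :=
  inferInstanceAs (Subsingleton ((_ ⟶ _) × (_ ⟶ _)))

/-- The functor `[m'] × I[n'] ⥤ [m] × I[n]` induced by a morphism of `Δᵒᵖ × Δᵒᵖ`. -/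
def classIndexMap {p q : SimplexCategoryᵒᵖ × SimplexCategoryᵒᵖ} (g : p ⟶ q) :
    classIndex q ⥤ classIndex p :=
  (g.1.unop.toOrderHom.monotone.functor).prod (chaoticFunctor g.2.unop.toOrderHom)

/-- The classifying diagram `N C` of a category `C`: the bisimplicial set whose
`(m,n)`-bisimplices are the functors `[m] × I[n] ⥤ C`. -/
def classDiag (C : Type) [Category C] : BiSSet where
  obj p := classIndex p ⥤ C
  map {p q} g := TypeCat.ofHom fun F => classIndexMap g ⋙ F
  map_id p := by
    refine ConcreteCategory.hom_ext _ _ fun F => ?_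
    change classIndexMap (𝟙 p) ⋙ F = F
    have : classIndexMap (𝟙 p) = 𝟭 (classIndex p) :=
      CategoryTheory.Functor.ext (fun X => rfl) (fun X Y f => Subsingleton.elim _ _)
    rw [this, Functor.id_comp]
  map_comp {p q r} g h := by
    refine ConcreteCategory.hom_ext _ _ fun F => ?_
    change classIndexMap (g ≫ h) ⋙ F = classIndexMap h ⋙ (classIndexMap g ⋙ F)
    have : classIndexMap (g ≫ h) = classIndexMap h ⋙ classIndexMap g :=
      CategoryTheory.Functor.ext (fun X => rfl) (fun X Y f => Subsingleton.elim _ _)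
    rw [this, Functor.assoc]

open CategoryTheory Opposite

/-- Levelwise product of simplicial sets. -/
def sProd (X Y : SSet) : SSet where
  obj n := X.obj n × Y.obj n
  map g := TypeCat.ofHom (Prod.map (X.map g) (Y.map g))
  map_id n := by
    refine ConcreteCategory.hom_ext _ _ fun x => ?_
    apply Prod.ext <;> simp
  map_comp g h := by
    refine ConcreteCategory.hom_ext _ _ fun x => ?_
    apply Prod.ext <;> simp

namespace BiSSet

variable (W : BiSSet)

/-- The map `(d₁, d₀) : W₁ → W₀ × W₀`. -/
def sourceTarget : W.row (SimplexCategory.mk 1) ⟶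
    sProd (W.row (SimplexCategory.mk 0)) (W.row (SimplexCategory.mk 0)) where
  app n := TypeCat.ofHom fun x => ((W.rowMap (SimplexCategory.δ 1)).app n x, (W.rowMap (SimplexCategory.δ 0)).app n x)
  naturality {n n'} g := by
    refine ConcreteCategory.hom_ext _ _ fun x => ?_
    apply Prod.ext
    · exact NatTrans.naturality_apply (W.rowMap (SimplexCategory.δ 1)) g x
    · exact NatTrans.naturality_apply (W.rowMap (SimplexCategory.δ 0)) g x

end BiSSet


section Aux

abbrev K0 (n : ℕ) := classIndex (op (SimplexCategory.mk 0), op (SimplexCategory.mk n))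
abbrev K1 (n : ℕ) := classIndex (op (SimplexCategory.mk 1), op (SimplexCategory.mk n))

-- sanity defeq checks
example (n : ℕ) : K0 n = (Fin 1 × Chaotic (Fin (n+1))) := rfl
example (n : ℕ) : K1 n = (Fin 2 × Chaotic (Fin (n+1))) := rfl
example : ((SimplexCategory.δ 1 : SimplexCategory.mk 0 ⟶ _).toOrderHom 0 : Fin 2) = 0 := rfl
example : ((SimplexCategory.δ 0 : SimplexCategory.mk 0 ⟶ _).toOrderHom 0 : Fin 2) = 1 := rfl

def k0Hom {n : ℕ} (j k : Fin (n+1)) : (((0:Fin 1), j) : K0 n) ⟶ ((0:Fin 1), k) :=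
  ⟨homOfLE (le_refl 0), ⟨⟩⟩
def k1Hom {n : ℕ} {a b : Fin 2} (h : a ≤ b) (j k : Fin (n+1)) :
    ((a, j) : K1 n) ⟶ ((b, k) : K1 n) := ⟨homOfLE h, ⟨⟩⟩


instance prodThin {α β : Type} [Category α] [Category β]
    [∀ (a b : α), Subsingleton (a ⟶ b)] [∀ (a b : β), Subsingleton (a ⟶ b)]
    (x y : α × β) : Subsingleton (x ⟶ y) :=
  inferInstanceAs (Subsingleton (_ × _))

lemma fin_succ_not_le_zero {N m : ℕ} (h1 : m + 1 < N) (h2 : 0 < N) :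
    ¬ ((⟨m + 1, h1⟩ : Fin N) ≤ ⟨0, h2⟩) := by simp [Fin.le_def]

variable {C : Type} [Category.{0} C]

lemma thin_map_comp {D : Type} [Category D] [∀ (a b : D), Subsingleton (a ⟶ b)]
    (A : D ⥤ C) {x y z : D} (u : x ⟶ y) (v : y ⟶ z) (w : x ⟶ z) :
    A.map w = A.map u ≫ A.map v := by
  rw [Subsingleton.elim w (u ≫ v), A.map_comp]

/-- The filler functor `[1] × I[n] ⥤ C` built from two rows `A B : I[n] ⥤ C`
(as functors from `K0 n`) and a connecting morphism `t` at vertex `i`. -/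
def mkF {n : ℕ} (i : Fin (n+1)) (A B : K0 n ⥤ C) (t : A.obj (0, i) ⟶ B.obj (0, i)) :
    K1 n ⥤ C where
  obj p :=
    match p with
    | (⟨0, _⟩, j) => A.obj (0, j)
    | (⟨_+1, _⟩, j) => B.obj (0, j)
  map {p q} g :=
    match p, q, g with
    | (⟨0, _⟩, j), (⟨0, _⟩, k), _ => A.map (k0Hom j k)
    | (⟨0, _⟩, j), (⟨_+1, _⟩, k), _ => A.map (k0Hom j i) ≫ t ≫ B.map (k0Hom i k)
    | (⟨_+1, _⟩, _), (⟨0, _⟩, _), g => absurd g.1.down.down (fin_succ_not_le_zero _ _)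
    | (⟨_+1, _⟩, j), (⟨_+1, _⟩, k), _ => B.map (k0Hom j k)
  map_id p := by
    obtain ⟨⟨av, ah⟩, j⟩ := p
    match av, ah with
    | 0, _ =>
      show A.map (k0Hom j j) = 𝟙 _
      erw [Subsingleton.elim (k0Hom j j) (𝟙 (((0:Fin 1), j) : K0 n)), A.map_id]
    | av+1, _ =>
      show B.map (k0Hom j j) = 𝟙 _
      erw [Subsingleton.elim (k0Hom j j) (𝟙 (((0:Fin 1), j) : K0 n)), B.map_id]
  map_comp {p q r} g h := by
    obtain ⟨⟨av, ah⟩, j⟩ := p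
    obtain ⟨⟨bv, bh⟩, k⟩ := q
    obtain ⟨⟨cv, ch⟩, l⟩ := r
    match av, ah, bv, bh, cv, ch, g, h with
    | 0, _, 0, _, 0, _, g, h =>
      exact thin_map_comp A (k0Hom j k) (k0Hom k l) (k0Hom j l)
    | 0, _, 0, _, _+1, _, g, h =>
      show A.map (k0Hom j i) ≫ t ≫ B.map (k0Hom i l) = _
      rw [thin_map_comp A (k0Hom j k) (k0Hom k i) (k0Hom j i)]
      simp only [Category.assoc]
    | 0, _, _+1, _, _+1, _, g, h =>
      show A.map (k0Hom j i) ≫ t ≫ B.map (k0Hom i l) = _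
      rw [thin_map_comp B (k0Hom i k) (k0Hom k l) (k0Hom i l)]
      simp only [Category.assoc]
    | _+1, _, _+1, _, _+1, _, g, h =>
      exact thin_map_comp B (k0Hom j k) (k0Hom k l) (k0Hom j l)
    | _+1, _, 0, _, _, _, g, h => exact absurd g.1.down.down (fin_succ_not_le_zero _ _)
    | 0, _, _+1, _, 0, _, g, h => exact absurd h.1.down.down (fin_succ_not_le_zero _ _)

/-- Restriction of a `1`-simplex-level functor to the source row. -/
def res0 {n : ℕ} (F : K1 n ⥤ C) : K0 n ⥤ C :=
  classIndexMap ((SimplexCategory.δ 1).op, 𝟙 (op (SimplexCategory.mk n))) ⋙ F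

/-- Restriction to the target row. -/
def res1 {n : ℕ} (F : K1 n ⥤ C) : K0 n ⥤ C :=
  classIndexMap ((SimplexCategory.δ 0).op, 𝟙 (op (SimplexCategory.mk n))) ⋙ F

/-- Restriction to the vertex `θ`. -/
def resV {n : ℕ} (θ : SimplexCategory.mk 0 ⟶ SimplexCategory.mk n) (F : K1 n ⥤ C) :
    K1 0 ⥤ C :=
  classIndexMap (𝟙 (op (SimplexCategory.mk 1)), θ.op) ⋙ F

/-- Vertex restriction at level `0`. -/
def resV0 {n : ℕ} (θ : SimplexCategory.mk 0 ⟶ SimplexCategory.mk n) (A : K0 n ⥤ C) :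
    K0 0 ⥤ C :=
  classIndexMap (𝟙 (op (SimplexCategory.mk 0)), θ.op) ⋙ A

lemma hom_congr {D : Type} [Category D] [∀ (a b : D), Subsingleton (a ⟶ b)]
    (F F' : D ⥤ C) {x y : D} {u : x ⟶ y} {e : F.obj x ⟶ F'.obj x} {e' : F'.obj y ⟶ F.obj y}
    (h : F.map u = e ≫ F'.map u ≫ e') (g : x ⟶ y) : F.map g = e ≫ F'.map g ≫ e' := by
  rw [Subsingleton.elim g u]; exact h

theorem ext1 {n : ℕ} (θ : SimplexCategory.mk 0 ⟶ SimplexCategory.mk n) (F F' : K1 n ⥤ C)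
    (h0 : res0 F = res0 F') (h1 : res1 F = res1 F') (hv : resV θ F = resV θ F') : F = F' := by
  set i : Fin (n+1) := θ.toOrderHom 0 with hi
  have hobj : ∀ p : K1 n, F.obj p = F'.obj p := by
    rintro ⟨⟨av, ah⟩, j⟩
    match av, ah with
    | 0, _ => exact Functor.congr_obj h0 ((0 : Fin 1), j)
    | 1, _ => exact Functor.congr_obj h1 ((0 : Fin 1), j)
    | av+2, ah => exact absurd (show av + 2 < 2 from ah) (by omega)
  refine CategoryTheory.Functor.ext hobj fun p q g => ?_
  obtain ⟨⟨av, ah⟩, j⟩ := p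
  obtain ⟨⟨bv, bh⟩, k⟩ := q
  match av, ah, bv, bh, g with
  | 0, _, 0, _, g => exact hom_congr F F' (Functor.congr_hom h0 (k0Hom j k)) g
  | 1, _, 1, _, g => exact hom_congr F F' (Functor.congr_hom h1 (k0Hom j k)) g
  | 1, _, 0, _, g => exact absurd g.1.down.down (fin_succ_not_le_zero _ _)
  | 0, _, 1, _, g =>
    have c1 := hom_congr F F' (Functor.congr_hom h0 (k0Hom j i))
      (k1Hom (le_refl 0) j i)
    have c2 := hom_congr F F' (Functor.congr_hom hv
      (k1Hom (show (0 : Fin 2) ≤ 1 by decide) (0 : Fin 1) (0 : Fin 1)))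
      (k1Hom (show (0 : Fin 2) ≤ 1 by decide) i i)
    have c3 := hom_congr F F' (Functor.congr_hom h1 (k0Hom i k))
      (k1Hom (le_refl 1) i k)
    erw [@Subsingleton.elim _ (instSubsingletonHomClassIndex _ _ _) g ((k1Hom (le_refl 0) j i : (_ : K1 n) ⟶ _) ≫
        k1Hom (show (0 : Fin 2) ≤ 1 by decide) i i ≫ k1Hom (le_refl 1) i k),
      ]
    erw [F.map_comp (k1Hom (le_refl 0) j i), F.map_comp (k1Hom (show (0 : Fin 2) ≤ 1 by decide) i i), F'.map_comp (k1Hom (le_refl 0) j i), F'.map_comp (k1Hom (show (0 : Fin 2) ≤ 1 by decide) i i), c1, c2, c3]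
    simp only [Category.assoc, eqToHom_trans_assoc, eqToHom_refl, Category.id_comp]
    erw [Category.assoc, Category.assoc, Category.assoc, Category.assoc, eqToHom_trans_assoc, eqToHom_refl, Category.id_comp, eqToHom_trans_assoc, eqToHom_refl, Category.id_comp]
    rfl
  | av+2, ah, _, _, g => exact absurd (show av + 2 < 2 from ah) (by omega)
  | _, _, bv+2, bh, g => exact absurd (show bv + 2 < 2 from bh) (by omega)

theorem res0_mkF {n : ℕ} (i : Fin (n+1)) (A B : K0 n ⥤ C)
    (t : A.obj (0, i) ⟶ B.obj (0, i)) : res0 (mkF i A B t) = A := by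
  have hobj : ∀ p : K0 n, (res0 (mkF i A B t)).obj p = A.obj p := by
    rintro ⟨⟨av, ah⟩, j⟩
    match av, ah with
    | 0, _ => rfl
  refine CategoryTheory.Functor.ext hobj fun p q g => ?_
  obtain ⟨⟨av, ah⟩, j⟩ := p
  obtain ⟨⟨bv, bh⟩, k⟩ := q
  match av, ah, bv, bh, g with
  | 0, _, 0, _, g =>
    show A.map (k0Hom j k) = _
    rw [@Subsingleton.elim _ (instSubsingletonHomClassIndex _ _ _) g (k0Hom j k)]
    erw [eqToHom_refl, eqToHom_refl, Category.comp_id, Category.id_comp]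

theorem res1_mkF {n : ℕ} (i : Fin (n+1)) (A B : K0 n ⥤ C)
    (t : A.obj (0, i) ⟶ B.obj (0, i)) : res1 (mkF i A B t) = B := by
  have hobj : ∀ p : K0 n, (res1 (mkF i A B t)).obj p = B.obj p := by
    rintro ⟨⟨av, ah⟩, j⟩
    match av, ah with
    | 0, _ => rfl
  refine CategoryTheory.Functor.ext hobj fun p q g => ?_
  obtain ⟨⟨av, ah⟩, j⟩ := p
  obtain ⟨⟨bv, bh⟩, k⟩ := q
  match av, ah, bv, bh, g with
  | 0, _, 0, _, g =>
    show B.map (k0Hom j k) = _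
    rw [@Subsingleton.elim _ (instSubsingletonHomClassIndex _ _ _) g (k0Hom j k)]
    erw [eqToHom_refl, eqToHom_refl, Category.comp_id, Category.id_comp]

theorem exists_unique_lift {n : ℕ} (θ : SimplexCategory.mk 0 ⟶ SimplexCategory.mk n)
    (A B : K0 n ⥤ C) (T : K1 0 ⥤ C)
    (hA : res0 T = resV0 θ A) (hB : res1 T = resV0 θ B) :
    ∃! F : K1 n ⥤ C, res0 F = A ∧ res1 F = B ∧ resV θ F = T := by
  set i : Fin (n+1) := θ.toOrderHom 0 with hidef
  have hTA : T.obj ((0 : Fin 2), (0 : Fin 1)) = A.obj ((0 : Fin 1), i) :=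
    Functor.congr_obj hA ((0 : Fin 1), (0 : Fin 1))
  have hTB : T.obj ((1 : Fin 2), (0 : Fin 1)) = B.obj ((0 : Fin 1), i) :=
    Functor.congr_obj hB ((0 : Fin 1), (0 : Fin 1))
  set t : A.obj (0, i) ⟶ B.obj (0, i) :=
    eqToHom hTA.symm ≫ T.map (k1Hom (show (0:Fin 2) ≤ 1 by decide) 0 0) ≫ eqToHom hTB with ht
  have hv : resV θ (mkF i A B t) = T := by
    have hobj : ∀ p : K1 0, (resV θ (mkF i A B t)).obj p = T.obj p := by
      rintro ⟨⟨av, ah⟩, ⟨jv, jh⟩⟩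
      match av, ah, jv, jh with
      | 0, _, 0, _ => exact hTA.symm
      | 1, _, 0, _ => exact hTB.symm
      | av+2, ah, _, _ => exact absurd (show av + 2 < 2 from ah) (by omega)
      | _, _, jv+1, jh => exact absurd (show jv + 1 < 1 from jh) (by omega)
    refine CategoryTheory.Functor.ext hobj fun p q g => ?_
    obtain ⟨⟨av, ah⟩, ⟨jv, jh⟩⟩ := p
    obtain ⟨⟨bv, bh⟩, ⟨kv, kh⟩⟩ := q
    match av, ah, jv, jh, bv, bh, kv, kh, g with
    | 0, _, 0, _, 0, _, 0, _, g =>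
      show A.map (k0Hom i i) = _
      erw [Subsingleton.elim (k0Hom i i) (𝟙 (((0 : Fin 1), i) : K0 n)), A.map_id,
        @Subsingleton.elim _ (instSubsingletonHomClassIndex _ _ _) g (𝟙 _), T.map_id]
      simp only [Category.id_comp, Category.comp_id, eqToHom_trans, eqToHom_refl]
      try rfl
    | 1, _, 0, _, 1, _, 0, _, g =>
      show B.map (k0Hom i i) = _
      erw [Subsingleton.elim (k0Hom i i) (𝟙 (((0 : Fin 1), i) : K0 n)), B.map_id,
        @Subsingleton.elim _ (instSubsingletonHomClassIndex _ _ _) g (𝟙 _), T.map_id]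
      simp only [Category.id_comp, Category.comp_id, eqToHom_trans, eqToHom_refl]
      try rfl
    | 0, _, 0, _, 1, _, 0, _, g =>
      show A.map (k0Hom i i) ≫ t ≫ B.map (k0Hom i i) = _
      erw [Subsingleton.elim (k0Hom i i) (𝟙 (((0 : Fin 1), i) : K0 n)), A.map_id, B.map_id,
        @Subsingleton.elim _ (instSubsingletonHomClassIndex _ _ _) g (k1Hom (show (0:Fin 2) ≤ 1 by decide) 0 0), ht]
      simp only [Category.id_comp, Category.comp_id, eqToHom_trans, eqToHom_refl]
      try rfl
    | 1, _, 0, _, 0, _, 0, _, g => exact absurd g.1.down.down (fin_succ_not_le_zero _ _)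
    | av+2, ah, _, _, _, _, _, _, g => exact absurd (show av + 2 < 2 from ah) (by omega)
    | _, _, _, _, bv+2, bh, _, _, g => exact absurd (show bv + 2 < 2 from bh) (by omega)
    | _, _, jv+1, jh, _, _, _, _, g => exact absurd (show jv + 1 < 1 from jh) (by omega)
    | _, _, _, _, _, _, kv+1, kh, g => exact absurd (show kv + 1 < 1 from kh) (by omega)
  refine ⟨mkF i A B t, ⟨res0_mkF i A B t, res1_mkF i A B t, hv⟩, ?_⟩
  rintro F ⟨f0, f1, fv⟩
  exact ext1 θ F (mkF i A B t)
    (by rw [f0, res0_mkF]) (by rw [f1, res1_mkF]) (by rw [fv, hv])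

theorem mkF_eq {x y : K0 0 ⥤ C} (f : K1 0 ⥤ C) (hx : res0 f = x) (hy : res1 f = y)
    (t : x.obj ((0 : Fin 1), (0 : Fin 1)) ⟶ y.obj ((0 : Fin 1), (0 : Fin 1)))
    (htt : f.map (k1Hom (show (0 : Fin 2) ≤ 1 by decide) 0 0) =
      eqToHom (Functor.congr_obj hx ((0 : Fin 1), (0 : Fin 1))) ≫ t ≫
      eqToHom (Functor.congr_obj hy ((0 : Fin 1), (0 : Fin 1))).symm) :
    mkF (0 : Fin 1) x y t = f := by
  have hfx : f.obj ((0 : Fin 2), (0 : Fin 1)) = x.obj ((0 : Fin 1), (0 : Fin 1)) :=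
    Functor.congr_obj hx ((0 : Fin 1), (0 : Fin 1))
  have hfy : f.obj ((1 : Fin 2), (0 : Fin 1)) = y.obj ((0 : Fin 1), (0 : Fin 1)) :=
    Functor.congr_obj hy ((0 : Fin 1), (0 : Fin 1))
  have hobj : ∀ p : K1 0, (mkF (0 : Fin 1) x y t).obj p = f.obj p := by
    rintro ⟨⟨av, ah⟩, ⟨jv, jh⟩⟩
    match av, ah, jv, jh with
    | 0, _, 0, _ => exact hfx.symm
    | 1, _, 0, _ => exact hfy.symm
    | av+2, ah, _, _ => exact absurd (show av + 2 < 2 from ah) (by omega)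
    | _, _, jv+1, jh => exact absurd (show jv + 1 < 1 from jh) (by omega)
  refine CategoryTheory.Functor.ext hobj fun p q g => ?_
  obtain ⟨⟨av, ah⟩, ⟨jv, jh⟩⟩ := p
  obtain ⟨⟨bv, bh⟩, ⟨kv, kh⟩⟩ := q
  match av, ah, jv, jh, bv, bh, kv, kh, g with
  | 0, _, 0, _, 0, _, 0, _, g =>
    show x.map (k0Hom 0 0) = _
    erw [Subsingleton.elim (k0Hom (0 : Fin 1) 0) (𝟙 (((0 : Fin 1), (0 : Fin 1)) : K0 0)),
      x.map_id, @Subsingleton.elim _ (instSubsingletonHomClassIndex _ _ _) g (𝟙 _), f.map_id]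
    simp only [Category.id_comp, Category.comp_id, eqToHom_trans, eqToHom_refl]
    try rfl
  | 1, _, 0, _, 1, _, 0, _, g =>
    show y.map (k0Hom 0 0) = _
    erw [Subsingleton.elim (k0Hom (0 : Fin 1) 0) (𝟙 (((0 : Fin 1), (0 : Fin 1)) : K0 0)),
      y.map_id, @Subsingleton.elim _ (instSubsingletonHomClassIndex _ _ _) g (𝟙 _), f.map_id]
    simp only [Category.id_comp, Category.comp_id, eqToHom_trans, eqToHom_refl]
    try rfl
  | 0, _, 0, _, 1, _, 0, _, g =>
    show x.map (k0Hom 0 0) ≫ t ≫ y.map (k0Hom 0 0) = _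
    erw [Subsingleton.elim (k0Hom (0 : Fin 1) 0) (𝟙 (((0 : Fin 1), (0 : Fin 1)) : K0 0)),
      x.map_id, y.map_id,
      @Subsingleton.elim _ (instSubsingletonHomClassIndex _ _ _) g (k1Hom (show (0 : Fin 2) ≤ 1 by decide) 0 0), htt]
    simp only [Category.id_comp, Category.comp_id, Category.assoc,
      eqToHom_trans, eqToHom_refl, eqToHom_trans_assoc]
    erw [Category.assoc, Category.assoc, eqToHom_trans_assoc, eqToHom_refl, Category.id_comp, eqToHom_trans, eqToHom_refl, Category.comp_id]
  | 1, _, 0, _, 0, _, 0, _, g => exact absurd g.1.down.down (fin_succ_not_le_zero _ _)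
  | av+2, ah, _, _, _, _, _, _, g => exact absurd (show av + 2 < 2 from ah) (by omega)
  | _, _, _, _, bv+2, bh, _, _, g => exact absurd (show bv + 2 < 2 from bh) (by omega)
  | _, _, jv+1, jh, _, _, _, _, g => exact absurd (show jv + 1 < 1 from jh) (by omega)
  | _, _, _, _, _, _, kv+1, kh, g => exact absurd (show kv + 1 < 1 from kh) (by omega)

end Aux


section Yoneda

lemma yE_comp {s : SimplexCategory} {X Y : SSet} (f : SSet.stdSimplex.obj s ⟶ X)
    (g : X ⟶ Y) :
    (SSet.yonedaEquiv (X := Y) (n := s)) (f ≫ g) = g.app (op s) ((SSet.yonedaEquiv (X := X) (n := s)) f) := rfl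

lemma yE_vcomp {s s' : SimplexCategory} {X : SSet}
    (v : SSet.stdSimplex.obj s ⟶ SSet.stdSimplex.obj s')
    (l : SSet.stdSimplex.obj s' ⟶ X) :
    (SSet.yonedaEquiv (X := X) (n := s)) (v ≫ l) =
      X.map (((SSet.yonedaEquiv (X := _) (n := s)) v).down).op ((SSet.yonedaEquiv (X := X) (n := s')) l) := by
  have h1 : v.app (op s) (ULift.up (𝟙 s)) =
      (SSet.stdSimplex.obj s').map (((SSet.yonedaEquiv (X := _) (n := s)) v).down).op
        (ULift.up (𝟙 s')) := by
    show _ = ULift.up (((SSet.yonedaEquiv (X := _) (n := s)) v).down ≫ 𝟙 s')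
    rw [Category.comp_id]
    rfl
  show l.app (op s) (v.app (op s) (ULift.up (𝟙 s))) = _
  exact (congrArg (fun x => l.app (op s) x) h1).trans (FunctorToTypes.naturality l _ _)

lemma yE_ext {s : SimplexCategory} {X : SSet} (f g : SSet.stdSimplex.obj s ⟶ X)
    (h : (SSet.yonedaEquiv (X := X) (n := s)) f = (SSet.yonedaEquiv (X := X) (n := s)) g) : f = g :=
  ((SSet.yonedaEquiv (X := X) (n := s))).injective h

end Yoneda

set_option maxHeartbeats 2000000 in
open BiSSet in
/-- For a small category `C`, the map `(d₁,d₀) : N(C)₁ → N(C)₀ × N(C)₀` is a simplicial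
covering space: it has the unique right lifting property against every vertex inclusion
`Δ[0] → Δ[n]`; moreover its fiber over any vertex `(x,y)` is the discrete set
`hom_C(x,y)` (via a bijection of objects `e : N(C)₀-points ≃ obj C`). -/
theorem classDiag_sourceTarget_covering (C : Type) [Category.{0} C] :
    (∀ (n : ℕ) (v : SSet.stdSimplex.obj (SimplexCategory.mk 0) ⟶
          SSet.stdSimplex.obj (SimplexCategory.mk n))
        (top : SSet.stdSimplex.obj (SimplexCategory.mk 0) ⟶
          (classDiag C).row (SimplexCategory.mk 1))
        (bot : SSet.stdSimplex.obj (SimplexCategory.mk n) ⟶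
          sProd ((classDiag C).row (SimplexCategory.mk 0))
            ((classDiag C).row (SimplexCategory.mk 0))),
        top ≫ (classDiag C).sourceTarget = v ≫ bot →
          ∃! l : SSet.stdSimplex.obj (SimplexCategory.mk n) ⟶
              (classDiag C).row (SimplexCategory.mk 1),
            v ≫ l = top ∧ l ≫ (classDiag C).sourceTarget = bot) ∧
    (∃ e : (classDiag C).Pt 0 ≃ C, ∀ x y : (classDiag C).Pt 0,
        Nonempty ({ f : (classDiag C).Pt 1 //
          (classDiag C).src f = x ∧ (classDiag C).tgt f = y } ≃ (e x ⟶ e y))) := by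
  constructor
  · -- the unique right lifting property against vertex inclusions
    intro n v top bot hcomm
    set θ : SimplexCategory.mk 0 ⟶ SimplexCategory.mk n :=
      ((SSet.yonedaEquiv (X := _) (n := _)) v).down with hθ
    have T : K1 0 ⥤ C := (SSet.yonedaEquiv (X := _) (n := _)) top
    have hcomm' := congrArg ((SSet.yonedaEquiv (X := _) (n := (SimplexCategory.mk 0)))) hcomm
    rw [yE_comp, yE_vcomp] at hcomm'
    set AB := (SSet.yonedaEquiv (X := _) (n := _)) bot with hAB
    have hA : res0 ((SSet.yonedaEquiv (X := _) (n := _)) top : K1 0 ⥤ C) =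
        resV0 θ (AB.1 : K0 n ⥤ C) := congrArg Prod.fst hcomm'
    have hB : res1 ((SSet.yonedaEquiv (X := _) (n := _)) top : K1 0 ⥤ C) =
        resV0 θ (AB.2 : K0 n ⥤ C) := congrArg Prod.snd hcomm'
    obtain ⟨F, ⟨hF0, hF1, hFv⟩, huniq⟩ :=
      exists_unique_lift θ AB.1 AB.2 ((SSet.yonedaEquiv (X := _) (n := _)) top) hA hB
    refine ⟨((SSet.yonedaEquiv (X := _) (n := _))).symm F, ⟨?_, ?_⟩, ?_⟩
    · apply yE_ext
      erw [yE_vcomp, Equiv.apply_symm_apply]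
      exact hFv
    · apply yE_ext
      erw [yE_comp, Equiv.apply_symm_apply]
      exact Prod.ext hF0 hF1
    · rintro l ⟨hl1, hl2⟩
      have hl1' := congrArg ((SSet.yonedaEquiv (X := _) (n := (SimplexCategory.mk 0)))) hl1
      rw [yE_vcomp] at hl1'
      have hl2' := congrArg ((SSet.yonedaEquiv (X := _) (n := (SimplexCategory.mk n)))) hl2
      rw [yE_comp] at hl2'
      have := huniq ((SSet.yonedaEquiv (X := _) (n := _)) l)
        ⟨congrArg Prod.fst hl2', congrArg Prod.snd hl2', hl1'⟩
      rw [← this, Equiv.symm_apply_apply]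
  · -- identification of the fibers
    refine ⟨⟨fun F => F.obj ((0 : Fin 1), (0 : Fin 1)),
      fun X => (Functor.const _).obj X, ?_, fun X => rfl⟩, ?_⟩
    · intro F
      have hobj : ∀ p : K0 0,
          ((Functor.const _).obj (F.obj ((0 : Fin 1), (0 : Fin 1)))).obj p = F.obj p := by
        rintro ⟨⟨jv, jh⟩, ⟨kv, kh⟩⟩
        match jv, jh, kv, kh with
        | 0, _, 0, _ => rfl
        | jv+1, jh, _, _ => exact absurd (show jv + 1 < 1 from jh) (by omega)
        | _, _, kv+1, kh => exact absurd (show kv + 1 < 1 from kh) (by omega)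
      refine CategoryTheory.Functor.ext hobj fun p q g => ?_
      obtain ⟨⟨jv, jh⟩, ⟨kv, kh⟩⟩ := p
      obtain ⟨⟨jv', jh'⟩, ⟨kv', kh'⟩⟩ := q
      match jv, jh, kv, kh, jv', jh', kv', kh', g with
      | 0, _, 0, _, 0, _, 0, _, g =>
        erw [@Subsingleton.elim _ (instSubsingletonHomClassIndex _ _ _) g (𝟙 _), F.map_id]
        simp only [Functor.const_obj_map, Category.id_comp, eqToHom_trans, eqToHom_refl]
        try rfl
      | jv+1, jh, _, _, _, _, _, _, g => exact absurd (show jv + 1 < 1 from jh) (by omega)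
      | _, _, kv+1, kh, _, _, _, _, g => exact absurd (show kv + 1 < 1 from kh) (by omega)
      | _, _, _, _, jv'+1, jh', _, _, g => exact absurd (show jv' + 1 < 1 from jh') (by omega)
      | _, _, _, _, _, _, kv'+1, kh', g => exact absurd (show kv' + 1 < 1 from kh') (by omega)
    · intro x y
      refine ⟨⟨fun f => eqToHom (Functor.congr_obj f.2.1 ((0 : Fin 1), (0 : Fin 1))).symm ≫
          f.1.map (k1Hom (show (0 : Fin 2) ≤ 1 by decide) 0 0) ≫
          eqToHom (Functor.congr_obj f.2.2 ((0 : Fin 1), (0 : Fin 1))),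
        fun g => ⟨mkF (0 : Fin 1) x y g, res0_mkF _ x y g, res1_mkF _ x y g⟩, ?_, ?_⟩⟩
      · rintro ⟨f, hx, hy⟩
        apply Subtype.ext
        exact mkF_eq f hx hy _ (by beta_reduce; erw [Category.assoc, Category.assoc, eqToHom_trans_assoc, eqToHom_refl, Category.id_comp, eqToHom_trans, eqToHom_refl, Category.comp_id]; rfl)
      · intro g
        show eqToHom _ ≫ (x.map (k0Hom 0 0) ≫ g ≫ y.map (k0Hom 0 0)) ≫ eqToHom _ = g
        erw [Subsingleton.elim (k0Hom (0 : Fin 1) 0) (𝟙 (((0 : Fin 1), (0 : Fin 1)) : K0 0)),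
          x.map_id, y.map_id]
        simp
        erw [eqToHom_refl, Category.id_comp, Category.comp_id]
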